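/- arXiv:2109.13669 — 5 statements merged into one kernel-verified Lean document; each statement's English description precedes it below -/
import Mathlib

section
/- For probability distributions P and Q on a finite set and any α, β ∈ [0,1]: β_α(P,Q) ≤ β if and only if α_β(P,Q) ≤ 1 − α, i.e., the functions β_α and α_β are dual: α_{β_α(P,Q)}(P,Q) ≤ 1 − α for all α ∈ [0,1]. -/
open scoped BigOperators
attribute [local instance] Classical.propDecidable

noncomputable section

/-- `P` is a probability mass function on the finite set `X`. -/
def IsPMF {X : Type*} [Fintype X] (P : X → ℝ) : Prop :=
  (∀ x, 0 ≤ P x) ∧ ∑ x, P x = 1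

/-- A randomized test is a function with values in `[0,1]`. -/
def IsTest {X : Type*} (T : X → ℝ) : Prop := ∀ x, 0 ≤ T x ∧ T x ≤ 1

/-- Neyman-Pearson beta function: minimum of `E_Q[T]` over tests with `E_P[T] ≥ a`. -/
def npBeta {X : Type*} [Fintype X] (P Q : X → ℝ) (a : ℝ) : ℝ :=
  sInf {b | ∃ T : X → ℝ, IsTest T ∧ a ≤ ∑ x, P x * T x ∧ b = ∑ x, Q x * T x}

/-- Dual alpha function: minimum of `E_P[1-T]` over tests with `E_Q[T] ≤ b`. -/
def npAlpha {X : Type*} [Fintype X] (P Q : X → ℝ) (b : ℝ) : ℝ :=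
  sInf {a | ∃ T : X → ℝ, IsTest T ∧ ∑ x, Q x * T x ≤ b ∧ a = ∑ x, P x * (1 - T x)}

section auxNP

variable {X : Type*} [Fintype X]

lemma pmf_le_one {P : X → ℝ} (hP : IsPMF P) (x : X) : P x ≤ 1 := by
  rw [← hP.2]
  exact Finset.single_le_sum (fun i _ => hP.1 i) (Finset.mem_univ x)

lemma pmf_min_pos {P : X → ℝ} (hP : IsPMF P) :
    ∃ c > 0, ∀ x, P x ≠ 0 → c ≤ P x := by
  classical
  have hsum : ∑ x, P x ≠ 0 := by rw [hP.2]; norm_num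
  have hne : (Finset.univ.filter (fun x => P x ≠ 0)).Nonempty := by
    obtain ⟨x, _, hx⟩ := Finset.exists_ne_zero_of_sum_ne_zero hsum
    exact ⟨x, by simp [hx]⟩
  refine ⟨(Finset.univ.filter (fun x => P x ≠ 0)).inf' hne P, ?_, ?_⟩
  · obtain ⟨x, hx, hx2⟩ := Finset.exists_mem_eq_inf' hne P
    rw [hx2]
    exact lt_of_le_of_ne (hP.1 x) (Ne.symm (Finset.mem_filter.mp hx).2)
  · intro x hx
    exact Finset.inf'_le P (by simp [hx])

lemma npBetaSet_nonempty (P Q : X → ℝ) (hP : IsPMF P) (hQ : IsPMF Q) {a : ℝ} (ha : a ≤ 1) :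
    {b | ∃ T : X → ℝ, IsTest T ∧ a ≤ ∑ x, P x * T x ∧ b = ∑ x, Q x * T x}.Nonempty := by
  refine ⟨1, fun _ => 1, fun x => ⟨zero_le_one, le_refl 1⟩, ?_, ?_⟩
  · simp [hP.2, ha]
  · simp [hQ.2]

lemma npBetaSet_bddBelow (P Q : X → ℝ) (hP : IsPMF P) (hQ : IsPMF Q) (a : ℝ) :
    BddBelow {b | ∃ T : X → ℝ, IsTest T ∧ a ≤ ∑ x, P x * T x ∧ b = ∑ x, Q x * T x} := by
  refine ⟨0, ?_⟩
  rintro v ⟨T, hT, _, rfl⟩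
  exact Finset.sum_nonneg fun x _ => mul_nonneg (hQ.1 x) (hT x).1

lemma npAlphaSet_nonempty (P Q : X → ℝ) (hP : IsPMF P) (hQ : IsPMF Q) {b : ℝ} (hb : 0 ≤ b) :
    {a | ∃ T : X → ℝ, IsTest T ∧ ∑ x, Q x * T x ≤ b ∧ a = ∑ x, P x * (1 - T x)}.Nonempty := by
  refine ⟨1, fun _ => 0, fun x => ⟨le_refl 0, zero_le_one⟩, ?_, ?_⟩
  · simpa using hb
  · simp [hP.2]

lemma npAlphaSet_bddBelow (P Q : X → ℝ) (hP : IsPMF P) (hQ : IsPMF Q) (b : ℝ) :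
    BddBelow {a | ∃ T : X → ℝ, IsTest T ∧ ∑ x, Q x * T x ≤ b ∧ a = ∑ x, P x * (1 - T x)} := by
  refine ⟨0, ?_⟩
  rintro v ⟨T, hT, _, rfl⟩
  exact Finset.sum_nonneg fun x _ => mul_nonneg (hP.1 x) (by linarith [(hT x).2])

lemma np_dual (P Q : X → ℝ) (hP : IsPMF P) (hQ : IsPMF Q) (a b : ℝ)
    (ha : a ∈ Set.Icc (0:ℝ) 1) (hb : b ∈ Set.Icc (0:ℝ) 1) :
    npBeta P Q a ≤ b ↔ npAlpha P Q b ≤ 1 - a := by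
  obtain ⟨cQ, hcQ, hcQle⟩ := pmf_min_pos hQ
  obtain ⟨cP, hcP, hcPle⟩ := pmf_min_pos hP
  constructor
  · intro h
    -- For every ε > 0 there is a test with E_Q[T] ≤ b and a - ε ≤ E_P[T]
    have key : ∀ ε > 0, ∃ T : X → ℝ, IsTest T ∧ (∑ x, Q x * T x) ≤ b ∧ a - ε ≤ ∑ x, P x * T x := by
      intro ε hε
      obtain ⟨v, hv, hvlt⟩ := (Real.sInf_le_iff (npBetaSet_bddBelow P Q hP hQ a)
        (npBetaSet_nonempty P Q hP hQ ha.2)).mp h (ε * cQ) (by positivity)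
      obtain ⟨T, hT, haT, rfl⟩ := hv
      set s := ∑ x, Q x * T x with hs
      by_cases hsb : s ≤ b
      · exact ⟨T, hT, hsb, by linarith⟩
      · push_neg at hsb
        have hs0 : 0 < s := lt_of_le_of_lt hb.1 hsb
        set θ := b / s with hθdef
        have hθ0 : 0 ≤ θ := div_nonneg hb.1 hs0.le
        have hθ1 : θ ≤ 1 := by rw [div_le_one hs0]; linarith
        refine ⟨fun x => if Q x = 0 then T x else θ * T x, ?_, ?_, ?_⟩
        · intro x
          by_cases h0 : Q x = 0 <;> simp only [h0, if_true, if_false, ite_true, ite_false]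
          · exact hT x
          · exact ⟨mul_nonneg hθ0 (hT x).1,
              le_trans (mul_le_of_le_one_left (hT x).1 hθ1) (hT x).2⟩
        · have heq : ∑ x, Q x * (if Q x = 0 then T x else θ * T x) = θ * s := by
            rw [hs, Finset.mul_sum]
            refine Finset.sum_congr rfl fun x _ => ?_
            by_cases h0 : Q x = 0
            · simp [h0]
            · simp only [h0, if_false, ite_false]; ring
          rw [heq, hθdef, div_mul_cancel₀ _ hs0.ne']
        · have hdiff : (∑ x, P x * T x) - (∑ x, P x * (if Q x = 0 then T x else θ * T x))
              ≤ (1 / cQ) * ((1 - θ) * s) := by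
            have hRHS : (1 / cQ) * ((1 - θ) * s) = ∑ x, (1 / cQ) * ((1 - θ) * (Q x * T x)) := by
              rw [← Finset.mul_sum, ← Finset.mul_sum, hs]
            rw [← Finset.sum_sub_distrib, hRHS]
            refine Finset.sum_le_sum fun x _ => ?_
            by_cases h0 : Q x = 0
            · simp [h0]
            · simp only [h0, if_false, ite_false]
              have h1 : P x * T x - P x * (θ * T x) = (1 - θ) * (P x * T x) := by ring
              rw [h1]
              have hPx1 : P x ≤ 1 := pmf_le_one hP x
              have hQx : cQ ≤ Q x := hcQle x h0
              have hTx := hT x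
              have : (1 - θ) * (P x * T x) ≤ (1 - θ) * ((Q x / cQ) * T x) := by
                apply mul_le_mul_of_nonneg_left _ (by linarith)
                apply mul_le_mul_of_nonneg_right _ hTx.1
                rw [le_div_iff₀ hcQ]
                nlinarith [hQ.1 x]
              calc (1 - θ) * (P x * T x) ≤ (1 - θ) * ((Q x / cQ) * T x) := this
                _ = 1 / cQ * ((1 - θ) * (Q x * T x)) := by field_simp
          have hsmall : (1 / cQ) * ((1 - θ) * s) ≤ ε := by
            have h1 : (1 - θ) * s = s - b := by
              rw [hθdef]; field_simp
            rw [h1]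
            rw [div_mul_eq_mul_div, one_mul, div_le_iff₀ hcQ]
            nlinarith
          linarith
    -- conclude npAlpha P Q b ≤ 1 - a
    refine le_of_forall_pos_le_add fun ε hε => ?_
    obtain ⟨T, hT, hQT, hPT⟩ := key ε hε
    have hmem : (∑ x, P x * (1 - T x)) ∈
        {a | ∃ T : X → ℝ, IsTest T ∧ ∑ x, Q x * T x ≤ b ∧ a = ∑ x, P x * (1 - T x)} :=
      ⟨T, hT, hQT, rfl⟩
    have hval : ∑ x, P x * (1 - T x) = 1 - ∑ x, P x * T x := by
      simp [mul_sub, Finset.sum_sub_distrib, hP.2]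
    have := csInf_le (npAlphaSet_bddBelow P Q hP hQ b) hmem
    rw [hval] at this
    calc npAlpha P Q b ≤ 1 - ∑ x, P x * T x := this
      _ ≤ 1 - a + ε := by linarith
  · intro h
    -- For every ε > 0 there is a test with a ≤ E_P[T] and E_Q[T] ≤ b + ε
    have key : ∀ ε > 0, npBeta P Q a ≤ b + ε := by
      intro ε hε
      obtain ⟨v, hv, hvlt⟩ := (Real.sInf_le_iff (npAlphaSet_bddBelow P Q hP hQ b)
        (npAlphaSet_nonempty P Q hP hQ hb.1)).mp h (ε * cP) (by positivity)
      obtain ⟨T, hT, hQT, rfl⟩ := hv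
      have hval : ∑ x, P x * (1 - T x) = 1 - ∑ x, P x * T x := by
        simp [mul_sub, Finset.sum_sub_distrib, hP.2]
      rw [hval] at hvlt
      set t := ∑ x, P x * T x with ht
      -- hvlt : 1 - t < 1 - a + ε * cP, i.e., a - ε * cP < t
      by_cases hta : a ≤ t
      · have hmem : (∑ x, Q x * T x) ∈
            {b | ∃ T : X → ℝ, IsTest T ∧ a ≤ ∑ x, P x * T x ∧ b = ∑ x, Q x * T x} :=
          ⟨T, hT, hta, rfl⟩
        have := csInf_le (npBetaSet_bddBelow P Q hP hQ a) hmem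
        calc npBeta P Q a ≤ ∑ x, Q x * T x := this
          _ ≤ b := hQT
          _ ≤ b + ε := by linarith
      · push_neg at hta
        have ht1 : t < 1 := lt_of_lt_of_le hta ha.2
        set θ := (a - t) / (1 - t) with hθdef
        have hθ0 : 0 ≤ θ := div_nonneg (by linarith) (by linarith)
        have hθ1 : θ ≤ 1 := by
          rw [div_le_one (by linarith)]
          linarith [ha.2]
        have hTest : IsTest (fun x => if P x = 0 then T x else T x + θ * (1 - T x)) := by
          intro x
          by_cases h0 : P x = 0 <;> simp only [h0, if_true, if_false, ite_true, ite_false]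
          · exact hT x
          · constructor
            · have := (hT x).1
              have := (hT x).2
              nlinarith
            · nlinarith [(hT x).1, (hT x).2]
        have hPsum : ∑ x, P x * (if P x = 0 then T x else T x + θ * (1 - T x)) = a := by
          have heq : ∑ x, P x * (if P x = 0 then T x else T x + θ * (1 - T x))
              = ∑ x, (P x * T x + θ * (P x * (1 - T x))) := by
            refine Finset.sum_congr rfl fun x _ => ?_
            by_cases h0 : P x = 0
            · simp [h0]
            · simp only [h0, if_false, ite_false]; ring
          rw [heq, Finset.sum_add_distrib, ← Finset.mul_sum, hval, ← ht, hθdef,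
            div_mul_cancel₀ _ (show (1:ℝ) - t ≠ 0 by linarith)]
          ring
        have hQsum : ∑ x, Q x * (if P x = 0 then T x else T x + θ * (1 - T x))
            ≤ (∑ x, Q x * T x) + ε := by
          have hsplit : ∑ x, Q x * (if P x = 0 then T x else T x + θ * (1 - T x))
              - (∑ x, Q x * T x) ≤ (1 / cP) * (θ * (1 - t)) := by
            rw [← Finset.sum_sub_distrib]
            have hRHS : (1 / cP) * (θ * (1 - t)) = ∑ x, (1 / cP) * (θ * (P x * (1 - T x))) := by
              rw [← Finset.mul_sum, ← Finset.mul_sum, hval, ht]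
            rw [hRHS]
            refine Finset.sum_le_sum fun x _ => ?_
            by_cases h0 : P x = 0
            · simp [h0]
            · simp only [h0, if_false, ite_false]
              have h1 : Q x * (T x + θ * (1 - T x)) - Q x * T x = θ * (Q x * (1 - T x)) := by ring
              rw [h1]
              have hQx1 : Q x ≤ 1 := pmf_le_one hQ x
              have hPx : cP ≤ P x := hcPle x h0
              have hTx := hT x
              have hstep : θ * (Q x * (1 - T x)) ≤ θ * ((P x / cP) * (1 - T x)) := by
                apply mul_le_mul_of_nonneg_left _ hθ0
                apply mul_le_mul_of_nonneg_right _ (by linarith [hTx.2])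
                rw [le_div_iff₀ hcP]
                nlinarith [hP.1 x]
              calc θ * (Q x * (1 - T x)) ≤ θ * ((P x / cP) * (1 - T x)) := hstep
                _ = 1 / cP * (θ * (P x * (1 - T x))) := by field_simp
          have hsmall : (1 / cP) * (θ * (1 - t)) ≤ ε := by
            have h1 : θ * (1 - t) = a - t := by
              rw [hθdef, div_mul_cancel₀ _ (show (1:ℝ) - t ≠ 0 by linarith)]
            rw [h1, div_mul_eq_mul_div, one_mul, div_le_iff₀ hcP]
            nlinarith
          linarith
        have hmem : (∑ x, Q x * (if P x = 0 then T x else T x + θ * (1 - T x))) ∈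
            {b | ∃ T : X → ℝ, IsTest T ∧ a ≤ ∑ x, P x * T x ∧ b = ∑ x, Q x * T x} :=
          ⟨_, hTest, le_of_eq hPsum.symm, rfl⟩
        have := csInf_le (npBetaSet_bddBelow P Q hP hQ a) hmem
        calc npBeta P Q a ≤ ∑ x, Q x * (if P x = 0 then T x else T x + θ * (1 - T x)) := this
          _ ≤ (∑ x, Q x * T x) + ε := hQsum
          _ ≤ b + ε := by linarith
    exact le_of_forall_pos_le_add key

end auxNP

/-- Duality between `β_α` and `α_β`: `β_α(P,Q) ≤ β ↔ α_β(P,Q) ≤ 1 - α`;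
in particular `α_{β_α(P,Q)}(P,Q) ≤ 1 - α`. -/
theorem npBeta_npAlpha_duality {X : Type*} [Fintype X] (P Q : X → ℝ)
    (hP : IsPMF P) (hQ : IsPMF Q) (a b : ℝ)
    (ha : a ∈ Set.Icc (0:ℝ) 1) (hb : b ∈ Set.Icc (0:ℝ) 1) :
    (npBeta P Q a ≤ b ↔ npAlpha P Q b ≤ 1 - a) ∧
      npAlpha P Q (npBeta P Q a) ≤ 1 - a := by
  have hBeta0 : 0 ≤ npBeta P Q a := by
    apply le_csInf (npBetaSet_nonempty P Q hP hQ ha.2)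
    rintro v ⟨T, hT, _, rfl⟩
    exact Finset.sum_nonneg fun x _ => mul_nonneg (hQ.1 x) (hT x).1
  have hBeta1 : npBeta P Q a ≤ 1 := by
    apply csInf_le (npBetaSet_bddBelow P Q hP hQ a)
    exact ⟨fun _ => 1, fun x => ⟨zero_le_one, le_refl 1⟩, by simp [hP.2, ha.2], by simp [hQ.2]⟩
  refine ⟨np_dual P Q hP hQ a b ha hb, ?_⟩
  exact (np_dual P Q hP hQ a (npBeta P Q a) ha ⟨hBeta0, hBeta1⟩).mp le_rfl
end
end

section
/- (Converse bound, Theorem 2 specialized) Consider a code with M messages, encoder inducing input distribution P_X on X^n (uniform messages mapped to codewords), channel P_{Y|X}, induced output distribution P_Y, disjoint decoding regions R_0, R_1, ..., R_M covering Y^n, such that the false-alarm probability satisfies P_{Y|X=∅}(Y ∉ R_0) ≤ ε_FA, the misdetection probability satisfies P_Y(Y ∈ R_0) ≤ ε_MD, and the inclusive error probability satisfies P(Ŵ ≠ W) ≤ ε_IE. Then β_{1−ε_IE}(P_{XY}, P_X Q_Y) ≤ Q_Y(Y ∉ R_0)/M for every auxiliary distribution Q_Y on Y^n. -/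
open scoped BigOperators
attribute [local instance] Classical.propDecidable

noncomputable section

/-- Core step of the converse bound (Theorem 2): for any code with small
false-alarm, misdetection and inclusive-error probabilities,
`β_{1-ε_IE}(P_{XY}, P_X Q_Y) ≤ Q_Y(Y ∉ R_0)/M`. -/
theorem converse_core {Xn Yn : Type*} [Fintype Xn] [Fintype Yn]
    (W : Xn → Yn → ℝ) (hW : ∀ x, IsPMF (W x)) (idle : Xn)
    (M : ℕ) (hM : 0 < M) (c : Fin M → Xn) (D : Yn → Option (Fin M))
    (Q : Yn → ℝ) (hQ : IsPMF Q) (εFA εMD εIE : ℝ)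
    (PX : Xn → ℝ)
    (hPX : PX = fun x => (∑ m : Fin M, if c m = x then (1:ℝ) else 0) / M)
    (PY : Yn → ℝ) (hPY : PY = fun y => ∑ x, PX x * W x y)
    (hFA : ∑ y ∈ Finset.univ.filter (fun y => D y ≠ none), W idle y ≤ εFA)
    (hMD : ∑ y ∈ Finset.univ.filter (fun y => D y = none), PY y ≤ εMD)
    (hIE : ((M:ℝ))⁻¹ *
      ∑ m : Fin M, ∑ y ∈ Finset.univ.filter (fun y => D y ≠ some m), W (c m) y ≤ εIE) :
    npBeta (fun p : Xn × Yn => PX p.1 * W p.1 p.2) (fun p : Xn × Yn => PX p.1 * Q p.2)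
        (1 - εIE)
      ≤ (∑ y ∈ Finset.univ.filter (fun y => D y ≠ none), Q y) / M := by
  classical
  have hMR : (0:ℝ) < M := by exact_mod_cast hM
  set N : Xn → ℕ := fun x => (Finset.univ.filter (fun m => c m = x)).card with hN
  have hPXN : ∀ x, PX x = (N x : ℝ) / M := by
    intro x; rw [hPX]; simp [hN, Finset.sum_boole]
  set T : Xn × Yn → ℝ :=
    fun p => if ∃ m, D p.2 = some m ∧ c m = p.1 then ((N p.1 : ℝ))⁻¹ else 0 with hT
  have hTest : IsTest T := by
    intro p
    by_cases h : ∃ m, D p.2 = some m ∧ c m = p.1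
    · obtain ⟨m, hm1, hm2⟩ := h
      have hcard : 1 ≤ N p.1 := Finset.card_pos.mpr ⟨m, by simp [hN, hm2]⟩
      constructor
      · simp only [hT]
        rw [if_pos ⟨m, hm1, hm2⟩]
        positivity
      · simp only [hT]
        rw [if_pos ⟨m, hm1, hm2⟩]
        have : (1:ℝ) ≤ (N p.1 : ℝ) := by exact_mod_cast hcard
        exact inv_le_one_of_one_le₀ this
    · simp [hT, h]
  have hkey : ∀ x y, PX x * T (x, y)
      = if ∃ m, D y = some m ∧ c m = x then (M:ℝ)⁻¹ else 0 := by
    intro x y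
    by_cases h : ∃ m, D y = some m ∧ c m = x
    · obtain ⟨m, hm1, hm2⟩ := h
      have hcard : 0 < N x := Finset.card_pos.mpr ⟨m, by simp [hN, hm2]⟩
      have hNne : ((N x : ℝ)) ≠ 0 := by positivity
      simp only [hT, hPXN]
      rw [if_pos (⟨m, hm1, hm2⟩ : ∃ m, D y = some m ∧ c m = x),
        if_pos (⟨m, hm1, hm2⟩ : ∃ m, D y = some m ∧ c m = x)]
      field_simp
    · simp [hT, h]
  set g : Yn → ℝ := fun y => (D y).elim 0 (fun m => W (c m) y) with hg
  have hA : ∑ p : Xn × Yn, (PX p.1 * W p.1 p.2) * T p = (M:ℝ)⁻¹ * ∑ y, g y := by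
    rw [Fintype.sum_prod_type_right, Finset.mul_sum]
    apply Finset.sum_congr rfl
    intro y _
    have hterm : ∀ x, (PX x * W x y) * T (x, y)
        = (if ∃ m, D y = some m ∧ c m = x then (M:ℝ)⁻¹ * W x y else 0) := by
      intro x
      rw [show (PX x * W x y) * T (x, y) = W x y * (PX x * T (x, y)) by ring, hkey]
      by_cases h : ∃ m, D y = some m ∧ c m = x <;> simp [h] <;> ring
    simp only [hterm]
    cases hD : D y with
    | none => simp [hg, hD]
    | some m =>
      have hiff : ∀ x, (∃ m', (some m : Option (Fin M)) = some m' ∧ c m' = x) ↔ c m = x := by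
        intro x
        constructor
        · rintro ⟨m', hm', rfl⟩; cases hm'; rfl
        · intro h; exact ⟨m, rfl, h⟩
      simp only [hiff]
      rw [Finset.sum_ite_eq Finset.univ (c m) (fun x => (M:ℝ)⁻¹ * W x y)]
      simp [hg, hD]
  have hB : ∑ m : Fin M, ∑ y ∈ Finset.univ.filter (fun y => D y = some m), W (c m) y
      = ∑ y, g y := by
    simp only [Finset.sum_filter]
    rw [Finset.sum_comm]
    apply Finset.sum_congr rfl
    intro y _
    cases hD : D y with
    | none => simp [hg, hD]
    | some m0 =>
      simp only [hD, Option.some_inj, hg, Option.elim]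
      rw [Finset.sum_ite_eq Finset.univ m0 (fun m => W (c m) y)]
      simp
  have hEP : (1 - εIE) ≤ ∑ p : Xn × Yn, (PX p.1 * W p.1 p.2) * T p := by
    rw [hA]
    have hsplit : ∀ m : Fin M,
        (∑ y ∈ Finset.univ.filter (fun y => D y = some m), W (c m) y)
        + (∑ y ∈ Finset.univ.filter (fun y => ¬ (D y = some m)), W (c m) y) = 1 := by
      intro m
      rw [Finset.sum_filter_add_sum_filter_not]
      exact (hW (c m)).2
    have h1 : ∑ y, g y = M - ∑ m : Fin M,
        ∑ y ∈ Finset.univ.filter (fun y => D y ≠ some m), W (c m) y := by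
      rw [← hB]
      have hsum := Finset.sum_congr rfl (fun m (_ : m ∈ (Finset.univ : Finset (Fin M))) => hsplit m)
      rw [Finset.sum_add_distrib] at hsum
      simp only [Finset.sum_const, Finset.card_univ, Fintype.card_fin, nsmul_eq_mul,
        mul_one] at hsum
      simp only [ne_eq]
      linarith [hsum]
    have hMM : ((M:ℝ))⁻¹ * M = 1 := inv_mul_cancel₀ (ne_of_gt hMR)
    rw [h1, mul_sub, hMM]
    linarith [hIE]
  have hEQ : ∑ p : Xn × Yn, (PX p.1 * Q p.2) * T p
      = (∑ y ∈ Finset.univ.filter (fun y => D y ≠ none), Q y) / M := by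
    rw [Fintype.sum_prod_type_right, Finset.sum_filter, Finset.sum_div]
    apply Finset.sum_congr rfl
    intro y _
    have hterm : ∀ x, (PX x * Q y) * T (x, y)
        = (if ∃ m, D y = some m ∧ c m = x then (M:ℝ)⁻¹ * Q y else 0) := by
      intro x
      rw [show (PX x * Q y) * T (x, y) = Q y * (PX x * T (x, y)) by ring, hkey]
      by_cases h : ∃ m, D y = some m ∧ c m = x <;> simp [h] <;> ring
    simp only [hterm]
    cases hD : D y with
    | none => simp [hD]
    | some m =>
      have hiff : ∀ x, (∃ m', (some m : Option (Fin M)) = some m' ∧ c m' = x) ↔ c m = x := by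
        intro x
        constructor
        · rintro ⟨m', hm', rfl⟩; cases hm'; rfl
        · intro h; exact ⟨m, rfl, h⟩
      simp only [hiff]
      rw [Finset.sum_ite_eq Finset.univ (c m) (fun _ => (M:ℝ)⁻¹ * Q y)]
      simp [hD]
      ring
  have hbdd : BddBelow {b | ∃ T' : Xn × Yn → ℝ, IsTest T' ∧
      (1 - εIE) ≤ ∑ p : Xn × Yn, (PX p.1 * W p.1 p.2) * T' p ∧
      b = ∑ p : Xn × Yn, (PX p.1 * Q p.2) * T' p} := by
    refine ⟨0, ?_⟩
    rintro b ⟨T', hT', _, rfl⟩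
    apply Finset.sum_nonneg
    intro p _
    have h1 : 0 ≤ PX p.1 := by rw [hPXN]; positivity
    exact mul_nonneg (mul_nonneg h1 (hQ.1 p.2)) (hT' p).1
  rw [← hEQ]
  exact csInf_le hbdd ⟨T, hTest, hEP, rfl⟩
end
end

section
/- (Relation between FA and MD regions) Let P_Y be the output distribution induced by a code, P_{Y|X=∅} the output distribution when the transmitter is idle, Q_Y an arbitrary auxiliary distribution, and R_0 ⊆ Y^n a set with P_Y(Y ∈ R_0) ≤ ε_MD and P_{Y|X=∅}(Y ∈ R_0) ≥ 1 − ε_FA. Then β_{1−ε_MD}(P_Y, Q_Y) ≤ 1 − β_{1−ε_FA}(P_{Y|X=∅}, Q_Y). -/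
open scoped BigOperators
attribute [local instance] Classical.propDecidable

noncomputable section

/-- Relation between false-alarm and misdetection regions:
`β_{1-ε_MD}(P_Y, Q_Y) ≤ 1 - β_{1-ε_FA}(P_{Y|X=∅}, Q_Y)`. -/
theorem fa_md_relation {Yn : Type*} [Fintype Yn]
    (PY Pidle Q : Yn → ℝ) (hPY : IsPMF PY) (hPidle : IsPMF Pidle) (hQ : IsPMF Q)
    (R0 : Finset Yn) (εFA εMD : ℝ)
    (hMD : ∑ y ∈ R0, PY y ≤ εMD)
    (hFA : 1 - εFA ≤ ∑ y ∈ R0, Pidle y) :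
    npBeta PY Q (1 - εMD) ≤ 1 - npBeta Pidle Q (1 - εFA) := by
  set ind : Yn → ℝ := fun y => if y ∈ R0 then 1 else 0 with hind
  have hindTest : IsTest ind := by
    intro x; constructor <;> simp [ind] <;> split <;> norm_num
  have hindTest' : IsTest (fun y => 1 - ind y) := by
    intro x
    rcases hindTest x with ⟨h1, h2⟩
    constructor <;> simp [ind] at * <;> linarith
  have hsum : ∀ (f : Yn → ℝ), ∑ x, f x * ind x = ∑ y ∈ R0, f y := by
    intro f
    simp only [ind, mul_ite, mul_one, mul_zero]
    rw [Finset.sum_ite_mem, Finset.univ_inter]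
  have hbdd : ∀ P : Yn → ℝ, ∀ a : ℝ, BddBelow
      {b | ∃ T : Yn → ℝ, IsTest T ∧ a ≤ ∑ x, P x * T x ∧ b = ∑ x, Q x * T x} := by
    intro P a
    refine ⟨0, ?_⟩
    rintro b ⟨T, hT, -, rfl⟩
    exact Finset.sum_nonneg fun x _ => mul_nonneg (hQ.1 x) (hT x).1
  have h1 : npBeta Pidle Q (1 - εFA) ≤ ∑ y ∈ R0, Q y := by
    apply csInf_le (hbdd _ _)
    exact ⟨ind, hindTest, by rw [hsum]; exact hFA, (hsum Q).symm⟩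
  have h2 : npBeta PY Q (1 - εMD) ≤ 1 - ∑ y ∈ R0, Q y := by
    apply csInf_le (hbdd _ _)
    refine ⟨fun y => 1 - ind y, hindTest', ?_, ?_⟩
    · have : ∑ x, PY x * (1 - ind x) = 1 - ∑ y ∈ R0, PY y := by
        simp [mul_sub, Finset.sum_sub_distrib, hPY.2, hsum PY]
      rw [this]; linarith
    · have : ∑ x, Q x * (1 - ind x) = 1 - ∑ y ∈ R0, Q y := by
        simp [mul_sub, Finset.sum_sub_distrib, hQ.2, hsum Q]
      rw [this]
  linarith
end
end

section
/- (Union-test bound via α function) With Z^{(3)} as above, P_Y(Z^{(3)}(Y)=1) ≤ 1 − α_{((M−1)/2)δ}(P_Y, Q_Y), where δ = P_X Q_Y(Z^{(2)}=1) and α_β(P,Q) := min over randomized tests T with E_Q[T] ≤ β of E_P[1−T]. -/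
open scoped BigOperators
attribute [local instance] Classical.propDecidable

noncomputable section

/-- Marginalization: integrating out all but one coordinate of an i.i.d. product. -/
lemma marg {Xn : Type*} [Fintype Xn] (M : ℕ) (PX : Xn → ℝ) (hPX : ∑ x, PX x = 1)
    (g : Xn → ℝ) (m : Fin M) :
    ∑ C : Fin M → Xn, (∏ m', PX (C m')) * g (C m) = ∑ x, PX x * g x := by
  classical
  set h : Fin M → Xn → ℝ := fun m' x => if m' = m then PX x * g x else PX x with hh
  have h1 : ∀ C : Fin M → Xn, (∏ m', PX (C m')) * g (C m) = ∏ m', h m' (C m') := by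
    intro C
    rw [← Finset.mul_prod_erase Finset.univ (fun m' => h m' (C m')) (Finset.mem_univ m),
        ← Finset.mul_prod_erase Finset.univ (fun m' => PX (C m')) (Finset.mem_univ m)]
    rw [Finset.prod_congr rfl (fun i hi => by
      simp [hh, Finset.ne_of_mem_erase hi] :
      ∀ i ∈ Finset.univ.erase m, h i (C i) = PX (C i))]
    simp only [hh, if_pos rfl]
    ring
  have h2 : ∀ m', ∑ x, h m' x = if m' = m then ∑ x, PX x * g x else 1 := by
    intro m'; by_cases hm : m' = m <;> simp [hh, hm, hPX]
  calc ∑ C : Fin M → Xn, (∏ m', PX (C m')) * g (C m)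
      = ∑ C : Fin M → Xn, ∏ m', h m' (C m') := by simp only [h1]
    _ = ∏ m', ∑ x, h m' x := (Fintype.prod_sum h).symm
    _ = ∑ x, PX x * g x := by
        rw [← Finset.mul_prod_erase Finset.univ _ (Finset.mem_univ m)]
        rw [Finset.prod_congr rfl (fun i hi => by
          rw [h2, if_neg (Finset.ne_of_mem_erase hi)] :
          ∀ i ∈ Finset.univ.erase m, (∑ x, h i x) = 1)]
        simp [h2]

lemma gauss_fin (M : ℕ) (hM : 0 < M) :
    (∑ w : Fin M, ((w : ℕ) : ℝ)) * 2 = (M:ℝ) * ((M:ℝ) - 1) := by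
  rw [Fin.sum_univ_eq_sum_range (fun i => (i:ℝ)) M]
  have h3 : ((∑ i ∈ Finset.range M, i) * 2 : ℕ) = (M * (M-1) : ℕ) :=
    Finset.sum_range_id_mul_two M
  have := congrArg (Nat.cast : ℕ → ℝ) h3
  push_cast [Nat.cast_sub (Nat.one_le_iff_ne_zero.mpr hM.ne')] at this
  linarith

lemma count_lt (M : ℕ) (w : Fin M) (c : ℝ) :
    ∑ m : Fin M, (if m < w then c else 0) = ((w : ℕ) : ℝ) * c := by
  classical
  rw [Finset.sum_ite, Finset.sum_const, Finset.sum_const_zero, add_zero]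
  have h : Finset.univ.filter (fun m => m < w) = Finset.Iio w := by
    ext m; simp [Finset.mem_Iio]
  rw [h, Fin.card_Iio]
  simp [nsmul_eq_mul]

/-- Union-test bound via the α function:
`P_Y(Z³ = 1) ≤ 1 - α_{((M-1)/2)δ}(P_Y, Q_Y)`. -/
theorem union_test_P_bound {Xn Yn : Type*} [Fintype Xn] [Fintype Yn]
    (PX : Xn → ℝ) (hPX : IsPMF PX)
    (Wch : Xn → Yn → ℝ) (hW : ∀ x, IsPMF (Wch x))
    (PY : Yn → ℝ) (hPY : PY = fun y => ∑ x, PX x * Wch x y)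
    (Q : Yn → ℝ) (hQ : IsPMF Q)
    (Z2 : Xn → Yn → Bool) (M : ℕ) (hM : 0 < M) (δ : ℝ)
    (hδ : ∑ x, ∑ y, PX x * Q y * (if Z2 x y then (1:ℝ) else 0) = δ) :
    ∑ C : Fin M → Xn, ∑ w : Fin M, ∑ y,
        (∏ m, PX (C m)) * ((M:ℝ))⁻¹ * PY y *
          (if ∃ m, m < w ∧ Z2 (C m) y = true then (1:ℝ) else 0)
      ≤ 1 - npAlpha PY Q (((M:ℝ) - 1) / 2 * δ) := by
  classical
  obtain ⟨hPXnn, hPXs⟩ := hPX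
  obtain ⟨hQnn, hQs⟩ := hQ
  set b : ℝ := ((M:ℝ) - 1) / 2 * δ with hb
  set T : Yn → ℝ := fun y => ∑ C : Fin M → Xn, ∑ w : Fin M,
    (∏ m, PX (C m)) * ((M:ℝ))⁻¹ *
      (if ∃ m, m < w ∧ Z2 (C m) y = true then (1:ℝ) else 0) with hT
  have hMpos : (0:ℝ) < (M:ℝ) := by exact_mod_cast hM
  have hprodnn : ∀ C : Fin M → Xn, 0 ≤ ∏ m, PX (C m) :=
    fun C => Finset.prod_nonneg fun m _ => hPXnn _
  have hCsum : ∑ C : Fin M → Xn, ∏ m, PX (C m) = 1 := by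
    have := marg M PX hPXs (fun _ => 1) ⟨0, hM⟩
    simpa [hPXs] using this
  have swap : ∀ f : Yn → ℝ, ∑ y, f y * T y
      = ∑ C : Fin M → Xn, ∑ w : Fin M, ∑ y,
        (∏ m, PX (C m)) * ((M:ℝ))⁻¹ * f y *
          (if ∃ m, m < w ∧ Z2 (C m) y = true then (1:ℝ) else 0) := by
    intro f
    simp only [hT, Finset.mul_sum]
    rw [Finset.sum_comm]
    refine Finset.sum_congr rfl fun C _ => ?_
    rw [Finset.sum_comm]
    exact Finset.sum_congr rfl fun w _ => Finset.sum_congr rfl fun y _ => by ring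
  have hPYnn : ∀ y, 0 ≤ PY y := by
    intro y; rw [hPY]
    exact Finset.sum_nonneg fun x _ => mul_nonneg (hPXnn x) ((hW x).1 y)
  have hPYs : ∑ y, PY y = 1 := by
    rw [hPY]
    rw [Finset.sum_comm]
    calc ∑ x, ∑ y, PX x * Wch x y = ∑ x, PX x * ∑ y, Wch x y := by
          simp [Finset.mul_sum]
      _ = 1 := by simp only [(hW _).2, mul_one]; exact hPXs
  have hindnn : ∀ (P : Prop) (inst : Decidable P), (0:ℝ) ≤ @ite ℝ P inst 1 0 := by
    intro P inst; split <;> norm_num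
  have hTnn : ∀ y, 0 ≤ T y := by
    intro y
    simp only [hT]
    refine Finset.sum_nonneg fun C _ => Finset.sum_nonneg fun w _ => ?_
    exact mul_nonneg (mul_nonneg (hprodnn C) (by positivity)) (hindnn _ _)
  have hTle : ∀ y, T y ≤ 1 := by
    intro y
    have h1 : T y ≤ ∑ C : Fin M → Xn, ∑ w : Fin M, (∏ m, PX (C m)) * ((M:ℝ))⁻¹ := by
      simp only [hT]
      refine Finset.sum_le_sum fun C _ => Finset.sum_le_sum fun w _ => ?_
      have hnn : (0:ℝ) ≤ (∏ m, PX (C m)) * ((M:ℝ))⁻¹ :=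
        mul_nonneg (hprodnn C) (by positivity)
      have hle : (if ∃ m, m < w ∧ Z2 (C m) y = true then (1:ℝ) else 0) ≤ 1 := by
        split <;> norm_num
      calc (∏ m, PX (C m)) * ((M:ℝ))⁻¹ *
            (if ∃ m, m < w ∧ Z2 (C m) y = true then (1:ℝ) else 0)
          ≤ (∏ m, PX (C m)) * ((M:ℝ))⁻¹ * 1 := mul_le_mul_of_nonneg_left hle hnn
        _ = (∏ m, PX (C m)) * ((M:ℝ))⁻¹ := mul_one _
    have h2 : ∑ C : Fin M → Xn, ∑ w : Fin M, (∏ m, PX (C m)) * ((M:ℝ))⁻¹ = 1 := by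
      simp only [Finset.sum_const, Finset.card_univ, Fintype.card_fin, nsmul_eq_mul]
      calc ∑ C : Fin M → Xn, (M:ℝ) * ((∏ m, PX (C m)) * ((M:ℝ))⁻¹)
          = ∑ C : Fin M → Xn, ∏ m, PX (C m) := by
            refine Finset.sum_congr rfl fun C _ => ?_
            field_simp
        _ = 1 := hCsum
    linarith
  -- bound on Q-expectation of T
  have hind : ∀ (C : Fin M → Xn) (w : Fin M) (y : Yn),
      (if ∃ m, m < w ∧ Z2 (C m) y = true then (1:ℝ) else 0)
        ≤ ∑ m : Fin M, (if m < w ∧ Z2 (C m) y = true then (1:ℝ) else 0) := by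
    intro C w y
    by_cases h : ∃ m, m < w ∧ Z2 (C m) y = true
    · obtain ⟨m0, hm0⟩ := h
      rw [if_pos ⟨m0, hm0⟩]
      calc (1:ℝ) = (if m0 < w ∧ Z2 (C m0) y = true then (1:ℝ) else 0) := by
            rw [if_pos hm0]
        _ ≤ _ := Finset.single_le_sum (f := fun m : Fin M =>
            (if m < w ∧ Z2 (C m) y = true then (1:ℝ) else 0))
            (fun i _ => hindnn _ _) (Finset.mem_univ m0)
    · rw [if_neg h]
      exact Finset.sum_nonneg fun i _ => hindnn _ _
  have hm : ∀ (w m : Fin M), ∑ C : Fin M → Xn, ∑ y,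
      (∏ m', PX (C m')) * ((M:ℝ))⁻¹ * Q y *
        (if m < w ∧ Z2 (C m) y = true then (1:ℝ) else 0)
      = if m < w then ((M:ℝ))⁻¹ * δ else 0 := by
    intro w m
    have hmarg := marg M PX hPXs
      (fun x => ∑ y, ((M:ℝ))⁻¹ * Q y * (if m < w ∧ Z2 x y = true then (1:ℝ) else 0)) m
    calc ∑ C : Fin M → Xn, ∑ y,
          (∏ m', PX (C m')) * ((M:ℝ))⁻¹ * Q y *
            (if m < w ∧ Z2 (C m) y = true then (1:ℝ) else 0)
        = ∑ C : Fin M → Xn, (∏ m', PX (C m')) *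
            ∑ y, ((M:ℝ))⁻¹ * Q y * (if m < w ∧ Z2 (C m) y = true then (1:ℝ) else 0) := by
          refine Finset.sum_congr rfl fun C _ => ?_
          rw [Finset.mul_sum]
          exact Finset.sum_congr rfl fun y _ => by ring
      _ = ∑ x, PX x * ∑ y, ((M:ℝ))⁻¹ * Q y *
            (if m < w ∧ Z2 x y = true then (1:ℝ) else 0) := hmarg
      _ = if m < w then ((M:ℝ))⁻¹ * δ else 0 := by
          by_cases hmw : m < w
          · simp only [hmw, true_and, if_true]
            calc ∑ x, PX x * ∑ y, ((M:ℝ))⁻¹ * Q y * (if Z2 x y = true then (1:ℝ) else 0)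
                = ((M:ℝ))⁻¹ * ∑ x, ∑ y, PX x * Q y * (if Z2 x y = true then (1:ℝ) else 0) := by
                  rw [Finset.mul_sum]
                  refine Finset.sum_congr rfl fun x _ => ?_
                  rw [Finset.mul_sum, Finset.mul_sum]
                  exact Finset.sum_congr rfl fun y _ => by ring
              _ = ((M:ℝ))⁻¹ * δ := by rw [hδ]
          · simp [hmw]
  have hQT : ∑ y, Q y * T y ≤ b := by
    rw [swap Q]
    have step1 : ∑ C : Fin M → Xn, ∑ w : Fin M, ∑ y,
        (∏ m, PX (C m)) * ((M:ℝ))⁻¹ * Q y *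
          (if ∃ m, m < w ∧ Z2 (C m) y = true then (1:ℝ) else 0)
        ≤ ∑ C : Fin M → Xn, ∑ w : Fin M, ∑ y,
        (∏ m, PX (C m)) * ((M:ℝ))⁻¹ * Q y *
          (∑ m : Fin M, (if m < w ∧ Z2 (C m) y = true then (1:ℝ) else 0)) := by
      refine Finset.sum_le_sum fun C _ => Finset.sum_le_sum fun w _ =>
        Finset.sum_le_sum fun y _ => ?_
      refine mul_le_mul_of_nonneg_left (hind C w y) ?_
      exact mul_nonneg (mul_nonneg (hprodnn C) (by positivity)) (hQnn y)
    have step2 : ∑ C : Fin M → Xn, ∑ w : Fin M, ∑ y,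
        (∏ m, PX (C m)) * ((M:ℝ))⁻¹ * Q y *
          (∑ m : Fin M, (if m < w ∧ Z2 (C m) y = true then (1:ℝ) else 0)) = b := by
      rw [Finset.sum_comm]
      have hw : ∀ w : Fin M, ∑ C : Fin M → Xn, ∑ y,
          (∏ m, PX (C m)) * ((M:ℝ))⁻¹ * Q y *
            (∑ m : Fin M, (if m < w ∧ Z2 (C m) y = true then (1:ℝ) else 0))
          = ((w : ℕ) : ℝ) * (((M:ℝ))⁻¹ * δ) := by
        intro w
        calc ∑ C : Fin M → Xn, ∑ y,
              (∏ m, PX (C m)) * ((M:ℝ))⁻¹ * Q y *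
                (∑ m : Fin M, (if m < w ∧ Z2 (C m) y = true then (1:ℝ) else 0))
            = ∑ C : Fin M → Xn, ∑ y, ∑ m : Fin M,
              (∏ m', PX (C m')) * ((M:ℝ))⁻¹ * Q y *
                (if m < w ∧ Z2 (C m) y = true then (1:ℝ) else 0) := by
              simp only [Finset.mul_sum]
          _ = ∑ m : Fin M, ∑ C : Fin M → Xn, ∑ y,
              (∏ m', PX (C m')) * ((M:ℝ))⁻¹ * Q y *
                (if m < w ∧ Z2 (C m) y = true then (1:ℝ) else 0) := by
              rw [Finset.sum_congr rfl fun C _ => (Finset.sum_comm : _ = ∑ m : Fin M, ∑ y,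
                (∏ m', PX (C m')) * ((M:ℝ))⁻¹ * Q y *
                  (if m < w ∧ Z2 (C m) y = true then (1:ℝ) else 0))]
              exact Finset.sum_comm
          _ = ∑ m : Fin M, (if m < w then ((M:ℝ))⁻¹ * δ else 0) :=
              Finset.sum_congr rfl fun m _ => hm w m
          _ = ((w : ℕ) : ℝ) * (((M:ℝ))⁻¹ * δ) := count_lt M w _
      rw [Finset.sum_congr rfl fun w _ => hw w, ← Finset.sum_mul]
      have hg := gauss_fin M hM
      have hsum : (∑ w : Fin M, ((w : ℕ) : ℝ)) = (M:ℝ) * ((M:ℝ) - 1) / 2 := by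
        linarith
      rw [hsum, hb]
      field_simp
    linarith
  -- conclude via npAlpha
  have hTtest : IsTest T := fun y => ⟨hTnn y, hTle y⟩
  have hmem : (∑ y, PY y * (1 - T y)) ∈
      {a | ∃ T' : Yn → ℝ, IsTest T' ∧ ∑ x, Q x * T' x ≤ b ∧ a = ∑ x, PY x * (1 - T' x)} :=
    ⟨T, hTtest, hQT, rfl⟩
  have hbdd : BddBelow
      {a | ∃ T' : Yn → ℝ, IsTest T' ∧ ∑ x, Q x * T' x ≤ b ∧ a = ∑ x, PY x * (1 - T' x)} := by
    refine ⟨0, fun a ha => ?_⟩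
    obtain ⟨T', hT', -, rfl⟩ := ha
    exact Finset.sum_nonneg fun y _ => mul_nonneg (hPYnn y) (by linarith [(hT' y).2])
  have halpha : npAlpha PY Q b ≤ ∑ y, PY y * (1 - T y) := csInf_le hbdd hmem
  have hsplit : ∑ y, PY y * (1 - T y) = 1 - ∑ y, PY y * T y := by
    simp [mul_sub, Finset.sum_sub_distrib, hPYs]
  rw [← swap PY]
  linarith
end
end

section
/- (Achievability, Theorem 1 core inequality) Let P_X be a distribution on X^n with induced output P_Y, Q_Y an auxiliary distribution on Y^n, δ^{(1)}, δ^{(2)} ∈ [0,1], and M ≤ 2/δ^{(2)} + 1. Consider random codewords C_1,...,C_M i.i.d. from P_X and the decoder that first applies the Neyman-Pearson test Z^{(1)} achieving α_{δ^{(1)}}(P_Y, P_{Y|X=∅}) (declaring idle if Z^{(1)}=0), and otherwise outputs the smallest m with Z^{(2)}(C_m, Y)=1, where Z^{(2)} achieves α_{δ^{(2)}}(P_{XY}, P_X Q_Y). Then the expected (over the codebook) inclusive error probability is at most α_{δ^{(1)}}(P_Y, P_{Y|X=∅}) + 1 − α_{((M−1)/2)δ^{(2)}}(P_Y, Q_Y)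 + α_{δ^{(2)}}(P_{XY}, P_X Q_Y). -/
open scoped BigOperators
attribute [local instance] Classical.propDecidable

noncomputable section

lemma pi_sum_prod {Xn : Type*} [Fintype Xn] {M : ℕ} (h : Fin M → Xn → ℝ) :
    ∑ C : Fin M → Xn, ∏ j, h j (C j) = ∏ j, ∑ x, h j x := by
  rw [Finset.prod_univ_sum (fun _ => (Finset.univ : Finset Xn)) h, Fintype.piFinset_univ]

lemma marg_one {Xn : Type*} [Fintype Xn] {M : ℕ} (PX : Xn → ℝ) (h1 : ∑ x, PX x = 1)
    (m : Fin M) (a : Xn → ℝ) :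
    ∑ C : Fin M → Xn, (∏ j, PX (C j)) * a (C m) = ∑ x, PX x * a x := by
  have e1 : ∀ C : Fin M → Xn, (∏ j, PX (C j)) * a (C m)
      = ∏ j, (PX (C j) * if j = m then a (C j) else 1) := by
    intro C
    rw [Finset.prod_mul_distrib, Finset.prod_ite_eq' Finset.univ m fun j => a (C j)]
    simp
  calc ∑ C : Fin M → Xn, (∏ j, PX (C j)) * a (C m)
      = ∑ C : Fin M → Xn, ∏ j, (PX (C j) * if j = m then a (C j) else 1) :=
        Finset.sum_congr rfl fun C _ => e1 C
    _ = ∏ j, ∑ x, (PX x * if j = m then a x else 1) :=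
        pi_sum_prod (fun j x => PX x * if j = m then a x else 1)
    _ = ∏ j, (if j = m then ∑ x, PX x * a x else 1) := by
        refine Finset.prod_congr rfl fun j _ => ?_
        by_cases hj : j = m <;> simp [hj, h1]
    _ = ∑ x, PX x * a x := by
        rw [Finset.prod_ite_eq' Finset.univ m fun _ => ∑ x, PX x * a x]; simp

lemma marg_two {Xn : Type*} [Fintype Xn] {M : ℕ} (PX : Xn → ℝ) (h1 : ∑ x, PX x = 1)
    {m m' : Fin M} (hne : m ≠ m') (a b : Xn → ℝ) :
    ∑ C : Fin M → Xn, (∏ j, PX (C j)) * (a (C m) * b (C m'))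
      = (∑ x, PX x * a x) * (∑ x, PX x * b x) := by
  have e1 : ∀ C : Fin M → Xn, (∏ j, PX (C j)) * (a (C m) * b (C m'))
      = ∏ j, (PX (C j) * ((if j = m then a (C j) else 1) * (if j = m' then b (C j) else 1))) := by
    intro C
    rw [Finset.prod_mul_distrib, Finset.prod_mul_distrib,
      Finset.prod_ite_eq' Finset.univ m fun j => a (C j),
      Finset.prod_ite_eq' Finset.univ m' fun j => b (C j)]
    simp
  calc ∑ C : Fin M → Xn, (∏ j, PX (C j)) * (a (C m) * b (C m'))
      = ∑ C : Fin M → Xn, ∏ j,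
          (PX (C j) * ((if j = m then a (C j) else 1) * (if j = m' then b (C j) else 1))) :=
        Finset.sum_congr rfl fun C _ => e1 C
    _ = ∏ j, ∑ x, (PX x * ((if j = m then a x else 1) * (if j = m' then b x else 1))) :=
        pi_sum_prod (fun j x => PX x * ((if j = m then a x else 1) * (if j = m' then b x else 1)))
    _ = ∏ j, ((if j = m then ∑ x, PX x * a x else 1) * (if j = m' then ∑ x, PX x * b x else 1)) := by
        refine Finset.prod_congr rfl fun j _ => ?_
        by_cases hj : j = m
        · subst hj; simp [hne]
        · by_cases hj' : j = m'
          · subst hj'; simp [hj]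
          · simp [hj, hj', h1]
    _ = (∑ x, PX x * a x) * (∑ x, PX x * b x) := by
        rw [Finset.prod_mul_distrib,
          Finset.prod_ite_eq' Finset.univ m fun _ => ∑ x, PX x * a x,
          Finset.prod_ite_eq' Finset.univ m' fun _ => ∑ x, PX x * b x]
        simp

lemma swap_marg {Xn Yn : Type*} [Fintype Xn] [Fintype Yn]
    (PX : Xn → ℝ) (W : Xn → Yn → ℝ) (f : Yn → ℝ) :
    ∑ x, PX x * ∑ y, W x y * f y = ∑ y, (∑ x, PX x * W x y) * f y := by
  calc ∑ x, PX x * ∑ y, W x y * f y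
      = ∑ x, ∑ y, PX x * (W x y * f y) :=
        Finset.sum_congr rfl fun x _ => Finset.mul_sum _ _ _
    _ = ∑ y, ∑ x, PX x * (W x y * f y) := Finset.sum_comm
    _ = ∑ y, (∑ x, PX x * W x y) * f y := by
        refine Finset.sum_congr rfl fun y _ => ?_
        rw [Finset.sum_mul]
        exact Finset.sum_congr rfl fun x _ => by ring

/-- Achievability (Theorem 1, core inequality): the codebook-averaged inclusive
error probability of the joint detection-and-decoding scheme is at most
`α_{δ¹}(P_Y, P_{Y|X=∅}) + 1 - α_{((M-1)/2)δ²}(P_Y, Q_Y) + α_{δ²}(P_{XY}, P_X Q_Y)`. -/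
theorem achievability_core {Xn Yn : Type*} [Fintype Xn] [Fintype Yn]
    (PX : Xn → ℝ) (hPX : IsPMF PX)
    (Wch : Xn → Yn → ℝ) (hW : ∀ x, IsPMF (Wch x)) (idle : Xn)
    (PY : Yn → ℝ) (hPY : PY = fun y => ∑ x, PX x * Wch x y)
    (Q : Yn → ℝ) (hQ : IsPMF Q)
    (δ1 δ2 : ℝ) (hδ1 : δ1 ∈ Set.Icc (0:ℝ) 1) (hδ2 : δ2 ∈ Set.Icc (0:ℝ) 1)
    (M : ℕ) (hM : 0 < M) (hMδ : (M:ℝ) ≤ 2 / δ2 + 1)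
    (Z1 : Yn → Bool)
    (hZ1c : ∑ y, Wch idle y * (if Z1 y then (1:ℝ) else 0) ≤ δ1)
    (hZ1a : ∑ y, PY y * (if Z1 y then (0:ℝ) else 1) = npAlpha PY (Wch idle) δ1)
    (Z2 : Xn → Yn → Bool)
    (hZ2c : ∑ x, ∑ y, PX x * Q y * (if Z2 x y then (1:ℝ) else 0) = δ2)
    (hZ2a : ∑ x, ∑ y, PX x * Wch x y * (if Z2 x y then (0:ℝ) else 1)
      = npAlpha (fun p : Xn × Yn => PX p.1 * Wch p.1 p.2)
          (fun p : Xn × Yn => PX p.1 * Q p.2) δ2) :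
    ∑ C : Fin M → Xn, (∏ j, PX (C j)) *
        (((M:ℝ))⁻¹ * ∑ m : Fin M, ∑ y, Wch (C m) y *
          (if Z1 y = false ∨ Z2 (C m) y = false ∨ ∃ m', m' < m ∧ Z2 (C m') y = true
            then (1:ℝ) else 0))
      ≤ npAlpha PY (Wch idle) δ1
        + (1 - npAlpha PY Q (((M:ℝ) - 1) / 2 * δ2))
        + npAlpha (fun p : Xn × Yn => PX p.1 * Wch p.1 p.2)
            (fun p : Xn × Yn => PX p.1 * Q p.2) δ2 := by
  obtain ⟨hPX0, hPX1⟩ := hPX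
  obtain ⟨hQ0, hQ1⟩ := hQ
  have hW0 : ∀ x y, 0 ≤ Wch x y := fun x => (hW x).1
  have hW1 : ∀ x, ∑ y, Wch x y = 1 := fun x => (hW x).2
  have hPY0 : ∀ y, 0 ≤ PY y := by
    intro y; rw [hPY]
    exact Finset.sum_nonneg fun x _ => mul_nonneg (hPX0 x) (hW0 x y)
  have hPY1 : ∑ y, PY y = 1 := by
    rw [hPY]
    calc ∑ y, ∑ x, PX x * Wch x y = ∑ x, ∑ y, PX x * Wch x y := Finset.sum_comm
      _ = ∑ x, PX x * ∑ y, Wch x y :=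
          Finset.sum_congr rfl fun x _ => (Finset.mul_sum _ _ _).symm
      _ = 1 := by simp only [hW1, mul_one]; exact hPX1
  set I : Xn → Yn → ℝ := fun x y => if Z2 x y then 1 else 0 with hIdef
  set T : Yn → ℝ := fun y => ∑ x, PX x * I x y with hTdef
  have hI0 : ∀ x y, 0 ≤ I x y := by intro x y; simp only [hIdef]; split <;> norm_num
  have hI1 : ∀ x y, I x y ≤ 1 := by intro x y; simp only [hIdef]; split <;> norm_num
  have hT0 : ∀ y, 0 ≤ T y := fun y =>
    Finset.sum_nonneg fun x _ => mul_nonneg (hPX0 x) (hI0 x y)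
  have hT1 : ∀ y, T y ≤ 1 := by
    intro y
    calc T y ≤ ∑ x, PX x * 1 := Finset.sum_le_sum fun x _ =>
          mul_le_mul_of_nonneg_left (hI1 x y) (hPX0 x)
      _ = 1 := by simp [hPX1]
  have hQT : ∑ y, Q y * T y = δ2 := by
    rw [← hZ2c, Finset.sum_comm]
    refine Finset.sum_congr rfl fun y _ => ?_
    rw [hTdef, Finset.mul_sum]
    exact Finset.sum_congr rfl fun x _ => by ring
  set c : ℝ := ((M : ℝ) - 1) / 2 with hcdef
  have hM1 : (1 : ℝ) ≤ (M : ℝ) := by exact_mod_cast hM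
  have hMpos : (0 : ℝ) < (M : ℝ) := by linarith
  have hc0 : 0 ≤ c := by rw [hcdef]; linarith
  set S : Yn → ℝ := fun y => min 1 (c * T y) with hSdef
  have hS0 : ∀ y, 0 ≤ S y := fun y => le_min zero_le_one (mul_nonneg hc0 (hT0 y))
  have hS1 : ∀ y, S y ≤ 1 := fun y => min_le_left _ _
  have hQS : ∑ y, Q y * S y ≤ c * δ2 := by
    calc ∑ y, Q y * S y ≤ ∑ y, Q y * (c * T y) := Finset.sum_le_sum fun y _ =>
          mul_le_mul_of_nonneg_left (min_le_right _ _) (hQ0 y)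
      _ = c * ∑ y, Q y * T y := by
          rw [Finset.mul_sum]; exact Finset.sum_congr rfl fun y _ => by ring
      _ = c * δ2 := by rw [hQT]
  have hAlpha2 : npAlpha PY Q (c * δ2) ≤ ∑ y, PY y * (1 - S y) := by
    apply csInf_le
    · refine ⟨0, fun a ha => ?_⟩
      obtain ⟨T', hT', _, ha⟩ := ha
      subst ha
      exact Finset.sum_nonneg fun y _ => mul_nonneg (hPY0 y) (by linarith [(hT' y).2])
    · exact ⟨S, fun y => ⟨hS0 y, hS1 y⟩, hQS, rfl⟩
  have hPYS : ∑ y, PY y * S y ≤ 1 - npAlpha PY Q (c * δ2) := by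
    have e : ∑ y, PY y * (1 - S y) = (∑ y, PY y) - ∑ y, PY y * S y := by
      rw [← Finset.sum_sub_distrib]
      exact Finset.sum_congr rfl fun y _ => by ring
    rw [hPY1] at e
    linarith
  -- pointwise indicator bound
  have ind_bound : ∀ (C : Fin M → Xn) (m : Fin M) (y : Yn),
      (if Z1 y = false ∨ Z2 (C m) y = false ∨ ∃ m', m' < m ∧ Z2 (C m') y = true
        then (1:ℝ) else 0)
      ≤ (if Z1 y then (0:ℝ) else 1) + (if Z2 (C m) y then (0:ℝ) else 1)
        + min 1 (∑ m' ∈ Finset.univ.filter (fun m' => m' < m), I (C m') y) := by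
    intro C m y
    have hs0 : (0:ℝ) ≤ ∑ m' ∈ Finset.univ.filter (fun m' => m' < m), I (C m') y :=
      Finset.sum_nonneg fun m' _ => hI0 _ _
    have ht1 : (0:ℝ) ≤ if Z1 y then (0:ℝ) else 1 := by split <;> norm_num
    have ht2 : (0:ℝ) ≤ if Z2 (C m) y then (0:ℝ) else 1 := by split <;> norm_num
    have hmin0 : (0:ℝ) ≤ min 1 (∑ m' ∈ Finset.univ.filter (fun m' => m' < m), I (C m') y) :=
      le_min zero_le_one hs0
    by_cases h : Z1 y = false ∨ Z2 (C m) y = false ∨ ∃ m', m' < m ∧ Z2 (C m') y = true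
    · rw [if_pos h]
      rcases h with h | h | ⟨m', hm', hz⟩
      · have e : (if Z1 y then (0:ℝ) else 1) = 1 := by simp [h]
        rw [e]; linarith
      · have e : (if Z2 (C m) y then (0:ℝ) else 1) = 1 := by simp [h]
        rw [e]; linarith
      · have hmem : m' ∈ Finset.univ.filter (fun m' => m' < m) := by simp [hm']
        have hval : (1:ℝ) ≤ I (C m') y := by simp [hIdef, hz]
        have hone : (1:ℝ) ≤ ∑ m' ∈ Finset.univ.filter (fun m' => m' < m), I (C m') y :=
          le_trans hval (Finset.single_le_sum (f := fun k => I (C k) y)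
            (fun k _ => hI0 _ _) hmem)
        have e : min (1:ℝ) (∑ m' ∈ Finset.univ.filter (fun m' => m' < m), I (C m') y) = 1 :=
          min_eq_left hone
        rw [e]; linarith
    · rw [if_neg h]; linarith
  have hcard : ∀ m : Fin M, (Finset.univ.filter (fun m' => m' < m)).card = (m : ℕ) := by
    intro m
    rw [show Finset.univ.filter (fun m' => m' < m) = Finset.Iio m by ext k; simp]
    exact Fin.card_Iio m
  have key_m : ∀ m : Fin M,
      ∑ C : Fin M → Xn, (∏ j, PX (C j)) * (∑ y, Wch (C m) y *
        (if Z1 y = false ∨ Z2 (C m) y = false ∨ ∃ m', m' < m ∧ Z2 (C m') y = true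
          then (1:ℝ) else 0))
      ≤ (∑ y, PY y * (if Z1 y then (0:ℝ) else 1))
        + (∑ x, ∑ y, PX x * Wch x y * (if Z2 x y then (0:ℝ) else 1))
        + ∑ y, PY y * min 1 (((m : ℕ) : ℝ) * T y) := by
    intro m
    have prodnn : ∀ C : Fin M → Xn, 0 ≤ ∏ j, PX (C j) :=
      fun C => Finset.prod_nonneg fun j _ => hPX0 _
    have step1 : ∑ C : Fin M → Xn, (∏ j, PX (C j)) * (∑ y, Wch (C m) y *
          (if Z1 y = false ∨ Z2 (C m) y = false ∨ ∃ m', m' < m ∧ Z2 (C m') y = true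
            then (1:ℝ) else 0))
        ≤ ∑ C : Fin M → Xn, (∏ j, PX (C j)) * (∑ y, Wch (C m) y *
            ((if Z1 y then (0:ℝ) else 1) + (if Z2 (C m) y then (0:ℝ) else 1)
              + min 1 (∑ m' ∈ Finset.univ.filter (fun m' => m' < m), I (C m') y))) :=
      Finset.sum_le_sum fun C _ => mul_le_mul_of_nonneg_left
        (Finset.sum_le_sum fun y _ =>
          mul_le_mul_of_nonneg_left (ind_bound C m y) (hW0 _ y)) (prodnn C)
    refine le_trans step1 ?_
    have split : ∑ C : Fin M → Xn, (∏ j, PX (C j)) * (∑ y, Wch (C m) y *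
            ((if Z1 y then (0:ℝ) else 1) + (if Z2 (C m) y then (0:ℝ) else 1)
              + min 1 (∑ m' ∈ Finset.univ.filter (fun m' => m' < m), I (C m') y)))
        = (∑ C : Fin M → Xn, (∏ j, PX (C j)) * (∑ y, Wch (C m) y * (if Z1 y then (0:ℝ) else 1)))
          + (∑ C : Fin M → Xn, (∏ j, PX (C j)) *
              (∑ y, Wch (C m) y * (if Z2 (C m) y then (0:ℝ) else 1)))
          + (∑ C : Fin M → Xn, (∏ j, PX (C j)) * (∑ y, Wch (C m) y *
              min 1 (∑ m' ∈ Finset.univ.filter (fun m' => m' < m), I (C m') y))) := by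
      rw [← Finset.sum_add_distrib, ← Finset.sum_add_distrib]
      refine Finset.sum_congr rfl fun C _ => ?_
      have e : ∑ y, Wch (C m) y *
            ((if Z1 y then (0:ℝ) else 1) + (if Z2 (C m) y then (0:ℝ) else 1)
              + min 1 (∑ m' ∈ Finset.univ.filter (fun m' => m' < m), I (C m') y))
          = (∑ y, Wch (C m) y * (if Z1 y then (0:ℝ) else 1))
            + (∑ y, Wch (C m) y * (if Z2 (C m) y then (0:ℝ) else 1))
            + (∑ y, Wch (C m) y *
                min 1 (∑ m' ∈ Finset.univ.filter (fun m' => m' < m), I (C m') y)) := by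
        rw [← Finset.sum_add_distrib, ← Finset.sum_add_distrib]
        exact Finset.sum_congr rfl fun y _ => by ring
      rw [e]; ring
    rw [split]
    have hE1 : ∑ C : Fin M → Xn, (∏ j, PX (C j)) *
          (∑ y, Wch (C m) y * (if Z1 y then (0:ℝ) else 1))
        = ∑ y, PY y * (if Z1 y then (0:ℝ) else 1) := by
      calc ∑ C : Fin M → Xn, (∏ j, PX (C j)) *
            (∑ y, Wch (C m) y * (if Z1 y then (0:ℝ) else 1))
          = ∑ x, PX x * ∑ y, Wch x y * (if Z1 y then (0:ℝ) else 1) :=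
            marg_one PX hPX1 m (fun x => ∑ y, Wch x y * (if Z1 y then (0:ℝ) else 1))
        _ = ∑ y, (∑ x, PX x * Wch x y) * (if Z1 y then (0:ℝ) else 1) :=
            swap_marg PX Wch _
        _ = ∑ y, PY y * (if Z1 y then (0:ℝ) else 1) := by
            refine Finset.sum_congr rfl fun y _ => ?_
            simp only [hPY]
    have hE2 : ∑ C : Fin M → Xn, (∏ j, PX (C j)) *
          (∑ y, Wch (C m) y * (if Z2 (C m) y then (0:ℝ) else 1))
        = ∑ x, ∑ y, PX x * Wch x y * (if Z2 x y then (0:ℝ) else 1) := by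
      calc ∑ C : Fin M → Xn, (∏ j, PX (C j)) *
            (∑ y, Wch (C m) y * (if Z2 (C m) y then (0:ℝ) else 1))
          = ∑ x, PX x * ∑ y, Wch x y * (if Z2 x y then (0:ℝ) else 1) :=
            marg_one PX hPX1 m (fun x => ∑ y, Wch x y * (if Z2 x y then (0:ℝ) else 1))
        _ = ∑ x, ∑ y, PX x * Wch x y * (if Z2 x y then (0:ℝ) else 1) := by
            refine Finset.sum_congr rfl fun x _ => ?_
            rw [Finset.mul_sum]
            exact Finset.sum_congr rfl fun y _ => by ring
    have hE3 : ∑ C : Fin M → Xn, (∏ j, PX (C j)) * (∑ y, Wch (C m) y *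
          min 1 (∑ m' ∈ Finset.univ.filter (fun m' => m' < m), I (C m') y))
        ≤ ∑ y, PY y * min 1 (((m : ℕ) : ℝ) * T y) := by
      have swapCy : ∑ C : Fin M → Xn, (∏ j, PX (C j)) * (∑ y, Wch (C m) y *
            min 1 (∑ m' ∈ Finset.univ.filter (fun m' => m' < m), I (C m') y))
          = ∑ y, ∑ C : Fin M → Xn, (∏ j, PX (C j)) * (Wch (C m) y *
            min 1 (∑ m' ∈ Finset.univ.filter (fun m' => m' < m), I (C m') y)) :=
        calc ∑ C : Fin M → Xn, (∏ j, PX (C j)) * (∑ y, Wch (C m) y *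
              min 1 (∑ m' ∈ Finset.univ.filter (fun m' => m' < m), I (C m') y))
            = ∑ C : Fin M → Xn, ∑ y, (∏ j, PX (C j)) * (Wch (C m) y *
              min 1 (∑ m' ∈ Finset.univ.filter (fun m' => m' < m), I (C m') y)) :=
              Finset.sum_congr rfl fun C _ => Finset.mul_sum _ _ _
          _ = ∑ y, ∑ C : Fin M → Xn, (∏ j, PX (C j)) * (Wch (C m) y *
              min 1 (∑ m' ∈ Finset.univ.filter (fun m' => m' < m), I (C m') y)) :=
              Finset.sum_comm
      rw [swapCy]
      refine Finset.sum_le_sum fun y _ => ?_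
      have b1 : ∑ C : Fin M → Xn, (∏ j, PX (C j)) * (Wch (C m) y *
            min 1 (∑ m' ∈ Finset.univ.filter (fun m' => m' < m), I (C m') y)) ≤ PY y := by
        calc ∑ C : Fin M → Xn, (∏ j, PX (C j)) * (Wch (C m) y *
              min 1 (∑ m' ∈ Finset.univ.filter (fun m' => m' < m), I (C m') y))
            ≤ ∑ C : Fin M → Xn, (∏ j, PX (C j)) * Wch (C m) y :=
              Finset.sum_le_sum fun C _ => by
                have h := mul_le_mul_of_nonneg_left
                  (min_le_left (1:ℝ)
                    (∑ m' ∈ Finset.univ.filter (fun m' => m' < m), I (C m') y)) (hW0 (C m) y)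
                rw [mul_one] at h
                exact mul_le_mul_of_nonneg_left h (prodnn C)
          _ = ∑ x, PX x * Wch x y := marg_one PX hPX1 m (fun x => Wch x y)
          _ = PY y := by simp only [hPY]
      have b2 : ∑ C : Fin M → Xn, (∏ j, PX (C j)) * (Wch (C m) y *
            min 1 (∑ m' ∈ Finset.univ.filter (fun m' => m' < m), I (C m') y))
          ≤ ((m : ℕ) : ℝ) * (PY y * T y) := by
        calc ∑ C : Fin M → Xn, (∏ j, PX (C j)) * (Wch (C m) y *
              min 1 (∑ m' ∈ Finset.univ.filter (fun m' => m' < m), I (C m') y))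
            ≤ ∑ C : Fin M → Xn, (∏ j, PX (C j)) * (Wch (C m) y *
              ∑ m' ∈ Finset.univ.filter (fun m' => m' < m), I (C m') y) :=
              Finset.sum_le_sum fun C _ => mul_le_mul_of_nonneg_left
                (mul_le_mul_of_nonneg_left (min_le_right _ _) (hW0 _ _)) (prodnn C)
          _ = ∑ m' ∈ Finset.univ.filter (fun m' => m' < m),
                ∑ C : Fin M → Xn, (∏ j, PX (C j)) * (Wch (C m) y * I (C m') y) := by
              rw [← Finset.sum_comm]
              refine Finset.sum_congr rfl fun C _ => ?_
              simp only [Finset.mul_sum]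
          _ = ∑ m' ∈ Finset.univ.filter (fun m' => m' < m),
                (∑ x, PX x * Wch x y) * (∑ x, PX x * I x y) := by
              refine Finset.sum_congr rfl fun m' hm' => ?_
              have hlt : m' < m := by simpa using hm'
              exact marg_two PX hPX1 (Ne.symm (ne_of_lt hlt))
                (fun x => Wch x y) (fun x => I x y)
          _ = ((m : ℕ) : ℝ) * (PY y * T y) := by
              rw [Finset.sum_const, hcard m, nsmul_eq_mul]
              congr 1
              simp only [hPY, hTdef]
      calc ∑ C : Fin M → Xn, (∏ j, PX (C j)) * (Wch (C m) y *
            min 1 (∑ m' ∈ Finset.univ.filter (fun m' => m' < m), I (C m') y))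
          ≤ min (PY y) (((m : ℕ) : ℝ) * (PY y * T y)) := le_min b1 b2
        _ = PY y * min 1 (((m : ℕ) : ℝ) * T y) := by
            rw [mul_min_of_nonneg _ _ (hPY0 y), mul_one]
            congr 1
            ring
    rw [hE1, hE2]
    exact add_le_add_right hE3 _
  have hGauss : ∑ m : Fin M, ((m : ℕ) : ℝ) = (M : ℝ) * ((M : ℝ) - 1) / 2 := by
    have h1 : ∑ m : Fin M, ((m : ℕ) : ℝ) = ∑ i ∈ Finset.range M, (i : ℝ) :=
      Fin.sum_univ_eq_sum_range (fun i => (i : ℝ)) M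
    have h2 : (∑ i ∈ Finset.range M, i) * 2 = M * (M - 1) := Finset.sum_range_id_mul_two M
    have hM1n : 1 ≤ M := hM
    have h3 : ((∑ i ∈ Finset.range M, i : ℕ) : ℝ) * 2 = (M : ℝ) * ((M : ℝ) - 1) := by
      calc ((∑ i ∈ Finset.range M, i : ℕ) : ℝ) * 2
          = (((∑ i ∈ Finset.range M, i) * 2 : ℕ) : ℝ) := by push_cast; ring
        _ = ((M * (M - 1) : ℕ) : ℝ) := by rw [h2]
        _ = (M : ℝ) * ((M : ℝ) - 1) := by push_cast [Nat.cast_sub hM1n]; ring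
    have h4 : (∑ i ∈ Finset.range M, (i : ℝ)) = ((∑ i ∈ Finset.range M, i : ℕ) : ℝ) := by
      push_cast; rfl
    rw [h1, h4]
    linarith
  have havg : ∀ y, (M : ℝ)⁻¹ * ∑ m : Fin M, min 1 (((m : ℕ) : ℝ) * T y) ≤ S y := by
    intro y
    have hinv : (0:ℝ) ≤ (M : ℝ)⁻¹ := inv_nonneg.mpr hMpos.le
    simp only [hSdef]
    refine le_min ?_ ?_
    · have h1 : ∑ m : Fin M, min 1 (((m : ℕ) : ℝ) * T y) ≤ (M : ℝ) := by
        calc ∑ m : Fin M, min 1 (((m : ℕ) : ℝ) * T y) ≤ ∑ _m : Fin M, (1:ℝ) :=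
              Finset.sum_le_sum fun m _ => min_le_left _ _
          _ = (M : ℝ) := by simp
      calc (M : ℝ)⁻¹ * ∑ m : Fin M, min 1 (((m : ℕ) : ℝ) * T y) ≤ (M : ℝ)⁻¹ * (M : ℝ) :=
            mul_le_mul_of_nonneg_left h1 hinv
        _ = 1 := inv_mul_cancel₀ (ne_of_gt hMpos)
    · have h1 : ∑ m : Fin M, min 1 (((m : ℕ) : ℝ) * T y)
          ≤ ((M : ℝ) * ((M : ℝ) - 1) / 2) * T y := by
        rw [← hGauss, Finset.sum_mul]
        exact Finset.sum_le_sum fun m _ => min_le_right _ _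
      have hMne : (M : ℝ) ≠ 0 := ne_of_gt hMpos
      calc (M : ℝ)⁻¹ * ∑ m : Fin M, min 1 (((m : ℕ) : ℝ) * T y)
          ≤ (M : ℝ)⁻¹ * (((M : ℝ) * ((M : ℝ) - 1) / 2) * T y) :=
            mul_le_mul_of_nonneg_left h1 hinv
        _ = c * T y := by rw [hcdef]; field_simp
  calc ∑ C : Fin M → Xn, (∏ j, PX (C j)) *
        (((M:ℝ))⁻¹ * ∑ m : Fin M, ∑ y, Wch (C m) y *
          (if Z1 y = false ∨ Z2 (C m) y = false ∨ ∃ m', m' < m ∧ Z2 (C m') y = true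
            then (1:ℝ) else 0))
      = ∑ C : Fin M → Xn, (M:ℝ)⁻¹ * ∑ m : Fin M, (∏ j, PX (C j)) * (∑ y, Wch (C m) y *
          (if Z1 y = false ∨ Z2 (C m) y = false ∨ ∃ m', m' < m ∧ Z2 (C m') y = true
            then (1:ℝ) else 0)) := by
        refine Finset.sum_congr rfl fun C _ => ?_
        rw [← Finset.mul_sum]
        ring
    _ = (M:ℝ)⁻¹ * ∑ C : Fin M → Xn, ∑ m : Fin M, (∏ j, PX (C j)) * (∑ y, Wch (C m) y *
          (if Z1 y = false ∨ Z2 (C m) y = false ∨ ∃ m', m' < m ∧ Z2 (C m') y = true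
            then (1:ℝ) else 0)) := (Finset.mul_sum _ _ _).symm
    _ = (M:ℝ)⁻¹ * ∑ m : Fin M, ∑ C : Fin M → Xn, (∏ j, PX (C j)) * (∑ y, Wch (C m) y *
          (if Z1 y = false ∨ Z2 (C m) y = false ∨ ∃ m', m' < m ∧ Z2 (C m') y = true
            then (1:ℝ) else 0)) := congrArg _ Finset.sum_comm
    _ ≤ (M:ℝ)⁻¹ * ∑ m : Fin M, ((∑ y, PY y * (if Z1 y then (0:ℝ) else 1))
          + (∑ x, ∑ y, PX x * Wch x y * (if Z2 x y then (0:ℝ) else 1))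
          + ∑ y, PY y * min 1 (((m : ℕ) : ℝ) * T y)) :=
        mul_le_mul_of_nonneg_left (Finset.sum_le_sum fun m _ => key_m m)
          (inv_nonneg.mpr hMpos.le)
    _ = (M:ℝ)⁻¹ * ((M:ℝ) * (∑ y, PY y * (if Z1 y then (0:ℝ) else 1))
          + (M:ℝ) * (∑ x, ∑ y, PX x * Wch x y * (if Z2 x y then (0:ℝ) else 1))
          + ∑ y, PY y * ∑ m : Fin M, min 1 (((m : ℕ) : ℝ) * T y)) := by
        congr 1
        rw [Finset.sum_add_distrib, Finset.sum_add_distrib, Finset.sum_const, Finset.sum_const]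
        simp only [nsmul_eq_mul, Finset.card_univ, Fintype.card_fin]
        congr 1
        rw [Finset.sum_comm]
        exact Finset.sum_congr rfl fun y _ => (Finset.mul_sum _ _ _).symm
    _ = (∑ y, PY y * (if Z1 y then (0:ℝ) else 1))
          + (∑ x, ∑ y, PX x * Wch x y * (if Z2 x y then (0:ℝ) else 1))
          + ∑ y, PY y * ((M:ℝ)⁻¹ * ∑ m : Fin M, min 1 (((m : ℕ) : ℝ) * T y)) := by
        have e1 : ∑ y, PY y * ((M:ℝ)⁻¹ * ∑ m : Fin M, min 1 (((m : ℕ) : ℝ) * T y))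
            = (M:ℝ)⁻¹ * ∑ y, PY y * ∑ m : Fin M, min 1 (((m : ℕ) : ℝ) * T y) := by
          rw [Finset.mul_sum]
          exact Finset.sum_congr rfl fun y _ => by ring
        have hMne : (M : ℝ) ≠ 0 := ne_of_gt hMpos
        have e2 : ∀ a b g : ℝ, (M:ℝ)⁻¹ * ((M:ℝ) * a + (M:ℝ) * b + g) = a + b + (M:ℝ)⁻¹ * g := by
          intro a b g; field_simp
        rw [e1]; exact e2 _ _ _
    _ ≤ (∑ y, PY y * (if Z1 y then (0:ℝ) else 1))
          + (∑ x, ∑ y, PX x * Wch x y * (if Z2 x y then (0:ℝ) else 1))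
          + ∑ y, PY y * S y := by
        refine add_le_add_right ?_ _
        exact Finset.sum_le_sum fun y _ => mul_le_mul_of_nonneg_left (havg y) (hPY0 y)
    _ ≤ npAlpha PY (Wch idle) δ1 + (1 - npAlpha PY Q (c * δ2))
          + npAlpha (fun p : Xn × Yn => PX p.1 * Wch p.1 p.2)
              (fun p : Xn × Yn => PX p.1 * Q p.2) δ2 := by
        linarith [hPYS, hZ1a, hZ2a]
end
end
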